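/- Let λ₁ = −2/k₁ and let L_λ = Id − λ DΓ[0] be the linearization at the trivial solution, where DΓ[0](v)(θ) = −(1/(2π)) ∫₀^{2π} K̂(θ − θ') v(θ') dθ' for v ∈ X. Then: (i) for 0 < λ < λ₁, L_λ is positive definite on X, namely ⟨L_λ v, v⟩_{L²} ≥ (1 − λ|k₁|/2) ‖v‖² > 0 for all v ∈ X; (ii) for λ > λ₁, there exists v ∈ X (e.g. v(θ) = cos(2θ)) with ⟨L_λ v, v⟩_{L²} < 0. Hence the trivial solution u ≡ 0 is linearly stable for λ < λ₁ and unstable for λ > λ₁. -/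

import Mathlib

open MeasureTheory Filter Topology Real intervalIntegral

/-- `Γ[u](θ) = (∫₀^{2π} e^{-u})⁻¹ ∫₀^{2π} K̂(θ - θ') e^{-u(θ')} dθ'`. -/
noncomputable def Gam (K u : ℝ → ℝ) (θ : ℝ) : ℝ :=
  (∫ t in (0:ℝ)..(2 * π), Real.exp (-(u t)))⁻¹ *
    ∫ t in (0:ℝ)..(2 * π), K (θ - t) * Real.exp (-(u t))

/-- Membership in `X = {u ∈ L²([0,2π]) : u(θ) = u(θ+π) a.e., u(θ) = u(2π-θ) a.e.,
∫₀^{2π} u = 0}`, for a (2π-periodic) representative `u : ℝ → ℝ`. -/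
def MemX (u : ℝ → ℝ) : Prop :=
  MemLp u 2 (volume.restrict (Set.Ioc (0:ℝ) (2 * π))) ∧
  (∀ᵐ θ : ℝ, u (θ + π) = u θ) ∧
  (∀ᵐ θ : ℝ, u (2 * π - θ) = u θ) ∧
  (∫ θ in (0:ℝ)..(2 * π), u θ) = 0

/-- `‖K̂‖_∞ = sup_{θ ∈ [0,2π]} |K̂(θ)|`. -/
noncomputable def supNorm (K : ℝ → ℝ) : ℝ := ⨆ θ : Set.Icc (0:ℝ) (2 * π), |K θ|

/-- The mean `∫₀^{2π} f dμ_u` of `f` against the probability measure `μ_u` with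
density `e^{-u}/∫₀^{2π} e^{-u}`. -/
noncomputable def mAvg (u f : ℝ → ℝ) : ℝ :=
  (∫ t in (0:ℝ)..(2 * π), Real.exp (-(u t)))⁻¹ *
    ∫ t in (0:ℝ)..(2 * π), f t * Real.exp (-(u t))

/-- The linearization `L_λ = Id - λ DΓ[0]`, where
`DΓ[0](v)(θ) = -(1/(2π)) ∫₀^{2π} K̂(θ-θ') v(θ') dθ'` on mean-zero functions. -/
noncomputable def Llin (K : ℝ → ℝ) (lam : ℝ) (v : ℝ → ℝ) (θ : ℝ) : ℝ :=
  v θ + lam * ((1 / (2 * π)) * ∫ t in (0:ℝ)..(2 * π), K (θ - t) * v t)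


/-!
Expanding `K̂` in its cosine series and integrating term by term diagonalises the quadratic form
of the convolution: `∫∫ K̂(θ - t) v(t) v(θ) = ∑ₙ kₙ (Aₙ² + Bₙ²)`, where `Aₙ`, `Bₙ` are the cosine
and sine coefficients of `v` at frequency `2n`. Bessel's inequality for the orthonormal system
`cos (2n t) / √π, sin (2n t) / √π` bounds `∑ₙ (Aₙ² + Bₙ²)` by `π ‖v‖²`, and `k₁` is the smallest
coefficient, so `⟨L_λ v, v⟩ = ‖v‖² + λ/(2π) ∑ₙ kₙ (Aₙ² + Bₙ²) ≥ (1 + λ k₁ / 2) ‖v‖²`.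
For `v = cos 2θ` only `A₁ = π` survives and `⟨L_λ v, v⟩ = π (1 + λ k₁ / 2)`.
-/

section DominatedSeries

variable {α : Type*} [MeasurableSpace α] {μ : Measure α} {w g : α → ℝ} {f : ℕ → α → ℝ}
  {C : ℕ → ℝ}

theorem integrable_mul_of_hasSum_of_norm_le (hw : Integrable w μ)
    (hf : ∀ m, AEStronglyMeasurable (f m) μ) (hfC : ∀ m x, ‖f m x‖ ≤ C m) (hC : Summable C)
    (hg : ∀ x, HasSum (fun m => f m x) (g x)) : Integrable (fun x => g x * w x) μ := by
  have hg_meas : AEStronglyMeasurable g μ :=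
    aestronglyMeasurable_of_tendsto_ae atTop
      (fun n => Finset.aestronglyMeasurable_fun_sum _ fun m _ => hf m)
      (.of_forall fun x => (hg x).tendsto_sum_nat)
  exact hw.bdd_mul hg_meas (.of_forall fun x => (hg x).norm_le_of_bounded hC.hasSum (hfC · x))

theorem hasSum_integral_mul_of_norm_le (hw : Integrable w μ)
    (hf : ∀ m, AEStronglyMeasurable (f m) μ) (hfC : ∀ m x, ‖f m x‖ ≤ C m) (hC : Summable C)
    (hg : ∀ x, HasSum (fun m => f m x) (g x)) :
    HasSum (fun m => ∫ x, f m x * w x ∂μ) (∫ x, g x * w x ∂μ) := by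
  have hint : ∀ m, Integrable (fun x => f m x * w x) μ := fun m =>
    hw.bdd_mul (hf m) (.of_forall (hfC m))
  have hnorm : ∀ m, ∫ x, ‖f m x * w x‖ ∂μ ≤ C m * ∫ x, ‖w x‖ ∂μ := fun m => by
    rw [← MeasureTheory.integral_const_mul]
    refine integral_mono (hint m).norm (hw.norm.const_mul _) fun x => ?_
    rw [norm_mul]
    exact mul_le_mul_of_nonneg_right (hfC m x) (norm_nonneg _)
  have hsum := hasSum_integral_of_summable_integral_norm hint
    ((hC.mul_right _).of_nonneg_of_le (fun m => integral_nonneg fun _ => norm_nonneg _) hnorm)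
  simpa only [((hg _).mul_right _).tsum_eq] using hsum

end DominatedSeries

noncomputable def cosCoeff (μ : Measure ℝ) (w : ℝ → ℝ) (ω : ℝ) : ℝ :=
  ∫ t, cos (ω * t) * w t ∂μ

noncomputable def sinCoeff (μ : Measure ℝ) (w : ℝ → ℝ) (ω : ℝ) : ℝ :=
  ∫ t, sin (ω * t) * w t ∂μ

section CosineSeriesKernel

variable {μ : Measure ℝ} {w : ℝ → ℝ}

theorem integrable_cos_mul (hw : Integrable w μ) (ω : ℝ) :
    Integrable (fun t => cos (ω * t) * w t) μ :=
  hw.bdd_mul (by fun_prop) (.of_forall fun _ => abs_cos_le_one _)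

theorem integrable_sin_mul (hw : Integrable w μ) (ω : ℝ) :
    Integrable (fun t => sin (ω * t) * w t) μ :=
  hw.bdd_mul (by fun_prop) (.of_forall fun _ => abs_sin_le_one _)

theorem abs_cosCoeff_le (hw : Integrable w μ) (ω : ℝ) :
    |cosCoeff μ w ω| ≤ ∫ t, |w t| ∂μ := by
  refine MeasureTheory.abs_integral_le_integral_abs.trans <|
    integral_mono (integrable_cos_mul hw ω).abs hw.abs fun t => ?_
  rw [abs_mul]
  exact mul_le_of_le_one_left (abs_nonneg _) (abs_cos_le_one _)

theorem abs_sinCoeff_le (hw : Integrable w μ) (ω : ℝ) :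
    |sinCoeff μ w ω| ≤ ∫ t, |w t| ∂μ := by
  refine MeasureTheory.abs_integral_le_integral_abs.trans <|
    integral_mono (integrable_sin_mul hw ω).abs hw.abs fun t => ?_
  rw [abs_mul]
  exact mul_le_of_le_one_left (abs_nonneg _) (abs_sin_le_one _)

variable {a ω : ℕ → ℝ} {K : ℝ → ℝ}

theorem hasSum_integral_cos_kernel (ha : Summable fun m => |a m|)
    (hK : ∀ θ, HasSum (fun m => a m * cos (ω m * θ)) (K θ)) (hw : Integrable w μ) (θ : ℝ) :
    HasSum (fun m => a m * (cos (ω m * θ) * cosCoeff μ w (ω m) +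
        sin (ω m * θ) * sinCoeff μ w (ω m)))
      (∫ t, K (θ - t) * w t ∂μ) := by
  have hsum := hasSum_integral_mul_of_norm_le (f := fun m t => a m * cos (ω m * (θ - t)))
    hw (fun m => by fun_prop)
    (fun m t => by simpa [abs_mul] using mul_le_of_le_one_right (abs_nonneg _) (abs_cos_le_one _))
    ha (fun t => hK (θ - t))
  convert hsum using 1
  funext m
  have hexpand : ∀ t, a m * cos (ω m * (θ - t)) * w t =
      a m * (cos (ω m * θ) * (cos (ω m * t) * w t) + sin (ω m * θ) * (sin (ω m * t) * w t)) :=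
    fun t => by rw [mul_sub, cos_sub]; ring
  simp only [hexpand, cosCoeff, sinCoeff]
  rw [MeasureTheory.integral_const_mul, integral_add ((integrable_cos_mul hw _).const_mul _)
    ((integrable_sin_mul hw _).const_mul _), MeasureTheory.integral_const_mul,
    MeasureTheory.integral_const_mul]

theorem norm_cos_kernel_term_le (hw : Integrable w μ) (m : ℕ) (θ : ℝ) :
    ‖a m * (cos (ω m * θ) * cosCoeff μ w (ω m) + sin (ω m * θ) * sinCoeff μ w (ω m))‖ ≤
      |a m| * (2 * ∫ t, |w t| ∂μ) := by
  rw [norm_mul, Real.norm_eq_abs, Real.norm_eq_abs]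
  gcongr
  have hcos := abs_cosCoeff_le hw (ω m)
  have hsin := abs_sinCoeff_le hw (ω m)
  calc |cos (ω m * θ) * cosCoeff μ w (ω m) + sin (ω m * θ) * sinCoeff μ w (ω m)|
      ≤ |cos (ω m * θ)| * |cosCoeff μ w (ω m)| + |sin (ω m * θ)| * |sinCoeff μ w (ω m)| := by
        rw [← abs_mul, ← abs_mul]
        exact abs_add_le _ _
    _ ≤ 1 * ∫ t, |w t| ∂μ + 1 * ∫ t, |w t| ∂μ := by
        gcongr
        exacts [abs_cos_le_one _, abs_sin_le_one _]
    _ = 2 * ∫ t, |w t| ∂μ := by ring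

theorem integrable_cos_kernel_mul (ha : Summable fun m => |a m|)
    (hK : ∀ θ, HasSum (fun m => a m * cos (ω m * θ)) (K θ)) (hw : Integrable w μ) :
    Integrable (fun θ => (∫ t, K (θ - t) * w t ∂μ) * w θ) μ :=
  integrable_mul_of_hasSum_of_norm_le hw (fun m => by fun_prop) (norm_cos_kernel_term_le hw)
    (ha.mul_right _) (hasSum_integral_cos_kernel ha hK hw)

theorem hasSum_cos_kernel_form (ha : Summable fun m => |a m|)
    (hK : ∀ θ, HasSum (fun m => a m * cos (ω m * θ)) (K θ)) (hw : Integrable w μ) :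
    HasSum (fun m => a m * (cosCoeff μ w (ω m) ^ 2 + sinCoeff μ w (ω m) ^ 2))
      (∫ θ, (∫ t, K (θ - t) * w t ∂μ) * w θ ∂μ) := by
  have hsum := hasSum_integral_mul_of_norm_le hw (fun m => by fun_prop)
    (norm_cos_kernel_term_le hw) (ha.mul_right _) (hasSum_integral_cos_kernel ha hK hw)
  convert hsum using 1
  funext m
  have hexpand : ∀ θ, a m * (cos (ω m * θ) * cosCoeff μ w (ω m) +
      sin (ω m * θ) * sinCoeff μ w (ω m)) * w θ =
      a m * (cosCoeff μ w (ω m) * (cos (ω m * θ) * w θ) +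
        sinCoeff μ w (ω m) * (sin (ω m * θ) * w θ)) :=
    fun θ => by ring
  simp only [hexpand]
  rw [MeasureTheory.integral_const_mul, integral_add ((integrable_cos_mul hw _).const_mul _)
    ((integrable_sin_mul hw _).const_mul _), MeasureTheory.integral_const_mul,
    MeasureTheory.integral_const_mul, cosCoeff, sinCoeff]
  ring

end CosineSeriesKernel

theorem integral_cos_int_mul_add (j : ℤ) (c : ℝ) :
    ∫ x in (0:ℝ)..2 * π, cos (j * x + c) = if j = 0 then 2 * π * cos c else 0 := by
  split_ifs with hj
  · simp [hj]
  have hj' : (j : ℝ) ≠ 0 := Int.cast_ne_zero.mpr hj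
  rw [intervalIntegral.integral_comp_mul_add cos hj', integral_cos, mul_zero, zero_add,
    show (j : ℝ) * (2 * π) + c = c + j * (2 * π) by ring, sin_add_int_mul_two_pi, sub_self,
    smul_zero]

theorem integral_cos_mul_cos_int (p q : ℤ) (hpq : p + q ≠ 0) (φ ψ : ℝ) :
    ∫ x in (0:ℝ)..2 * π, cos (p * x - φ) * cos (q * x - ψ) =
      if p = q then π * cos (φ - ψ) else 0 := by
  have hprod : ∀ x : ℝ, cos (p * x - φ) * cos (q * x - ψ) =
      (cos (((p - q : ℤ) : ℝ) * x + (ψ - φ)) + cos (((p + q : ℤ) : ℝ) * x + -(φ + ψ))) / 2 := by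
    intro x
    push_cast
    rw [show ((p : ℝ) - q) * x + (ψ - φ) = (p * x - φ) - (q * x - ψ) by ring,
      show ((p : ℝ) + q) * x + -(φ + ψ) = (p * x - φ) + (q * x - ψ) by ring,
      cos_sub (p * x - φ), cos_add (p * x - φ)]
    ring
  have hint : ∀ j : ℤ, ∀ c : ℝ, IntervalIntegrable (fun x => cos (j * x + c)) volume 0 (2 * π) :=
    fun j c => (by fun_prop : Continuous fun x : ℝ => cos (j * x + c)).intervalIntegrable _ _
  simp only [hprod]
  rw [intervalIntegral.integral_div, intervalIntegral.integral_add (hint _ _) (hint _ _),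
    integral_cos_int_mul_add, integral_cos_int_mul_add, if_neg hpq, ← neg_sub φ ψ, cos_neg]
  by_cases hpq' : p = q <;> simp [hpq', sub_eq_zero]
  ring

local notation "μ₀" => volume.restrict (Set.Ioc (0:ℝ) (2 * π))

theorem integral_eq_intervalIntegral_zero_two_pi (f : ℝ → ℝ) :
    ∫ t, f t ∂μ₀ = ∫ t in (0:ℝ)..2 * π, f t :=
  (intervalIntegral.integral_of_le (by positivity)).symm

theorem inner_toLp_toLp {α : Type*} [MeasurableSpace α] {μ : Measure α} {f g : α → ℝ}
    (hf : MemLp f 2 μ) (hg : MemLp g 2 μ) :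
    inner ℝ (hf.toLp f) (hg.toLp g) = ∫ x, f x * g x ∂μ := by
  rw [L2.inner_def]
  refine integral_congr_ae ?_
  filter_upwards [hf.coeFn_toLp, hg.coeFn_toLp] with x hfx hgx
  rw [hfx, hgx, real_inner_eq_re_inner, RCLike.inner_apply, conj_trivial]
  simp [mul_comm]

theorem integral_mul_self_eq_sq_eLpNorm {α : Type*} [MeasurableSpace α] {μ : Measure α}
    {f : α → ℝ} (hf : MemLp f 2 μ) :
    ∫ x, f x * f x ∂μ = (eLpNorm f 2 μ).toReal ^ 2 := by
  rw [← inner_toLp_toLp hf hf, real_inner_self_eq_norm_sq, Lp.norm_toLp]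

section TrigonometricSystem

variable {ι : Type*} (n : ι → ℤ)

noncomputable def trigSystem : ι ⊕ ι → ℝ → ℝ :=
  Sum.elim (fun i t => cos (n i * t) / √π) (fun i t => sin (n i * t) / √π)

/-- Writing `sin x = cos (x - π / 2)` lets one product formula cover all four pairings. -/
theorem trigSystem_eq_cos (i : ι ⊕ ι) (t : ℝ) :
    trigSystem n i t =
      cos (Sum.elim n n i * t - Sum.elim (fun _ => 0) (fun _ => π / 2) i) / √π := by
  cases i <;> simp [trigSystem, cos_sub_pi_div_two]

theorem memLp_trigSystem (i : ι ⊕ ι) : MemLp (trigSystem n i) 2 μ₀ := by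
  rw [show trigSystem n i = _ from funext (trigSystem_eq_cos n i)]
  refine MemLp.of_bound (by fun_prop) (1 / √π) (.of_forall fun t => ?_)
  rw [norm_div, Real.norm_eq_abs, Real.norm_eq_abs, abs_of_pos (sqrt_pos.2 pi_pos)]
  gcongr
  exact abs_cos_le_one _

variable {n}

theorem integral_trigSystem_mul [DecidableEq ι] (hn : Function.Injective n) (hpos : ∀ i, 0 < n i)
    (i j : ι ⊕ ι) :
    ∫ t, trigSystem n i t * trigSystem n j t ∂μ₀ = if i = j then 1 else 0 := by
  have hpos' : ∀ i, 0 < Sum.elim n n i := fun i => by cases i <;> exact hpos _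
  simp only [trigSystem_eq_cos, div_mul_div_comm, mul_self_sqrt pi_pos.le]
  rw [MeasureTheory.integral_div, integral_eq_intervalIntegral_zero_two_pi,
    integral_cos_mul_cos_int _ _ (add_pos (hpos' i) (hpos' j)).ne']
  cases i <;> cases j <;> simp [hn.eq_iff, apply_ite (· / π), pi_ne_zero]

theorem sum_sq_cosCoeff_add_sq_sinCoeff_le (hn : Function.Injective n) (hpos : ∀ i, 0 < n i)
    {v : ℝ → ℝ} (hv : MemLp v 2 μ₀) (s : Finset ι) :
    ∑ i ∈ s, (cosCoeff μ₀ v (n i) ^ 2 + sinCoeff μ₀ v (n i) ^ 2) ≤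
      π * (eLpNorm v 2 μ₀).toReal ^ 2 := by
  classical
  let e : ι ⊕ ι → Lp ℝ 2 μ₀ := fun i => (memLp_trigSystem n i).toLp _
  have horth : Orthonormal ℝ e := orthonormal_iff_ite.2 fun i j => by
    rw [inner_toLp_toLp, integral_trigSystem_mul hn hpos]
  have hcos : ∀ i, inner ℝ (e (.inl i)) (hv.toLp v) = cosCoeff μ₀ v (n i) / √π := fun i => by
    simp only [e, inner_toLp_toLp, trigSystem, Sum.elim_inl, div_mul_eq_mul_div,
      MeasureTheory.integral_div, cosCoeff]
  have hsin : ∀ i, inner ℝ (e (.inr i)) (hv.toLp v) = sinCoeff μ₀ v (n i) / √π := fun i => by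
    simp only [e, inner_toLp_toLp, trigSystem, Sum.elim_inr, div_mul_eq_mul_div,
      MeasureTheory.integral_div, sinCoeff]
  have hbessel := horth.sum_inner_products_le (s := s.disjSum s) (hv.toLp v)
  simp only [Finset.sum_disjSum, hcos, hsin, Lp.norm_toLp, Real.norm_eq_abs, sq_abs, div_pow,
    sq_sqrt pi_pos.le, ← Finset.sum_div, ← add_div, ← Finset.sum_add_distrib] at hbessel
  rwa [div_le_iff₀' pi_pos] at hbessel

end TrigonometricSystem

theorem mul_le_of_hasSum_mul_of_sum_le {ι : Type*} {a c : ι → ℝ} {a₀ B Q : ℝ}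
    (hQ : HasSum (fun i => a i * c i) Q) (hc : ∀ i, 0 ≤ c i)
    (hB : ∀ s : Finset ι, ∑ i ∈ s, c i ≤ B) (ha : ∀ i, a₀ ≤ a i) (ha₀ : a₀ ≤ 0) :
    a₀ * B ≤ Q :=
  calc a₀ * B ≤ a₀ * ∑' i, c i := mul_le_mul_of_nonpos_left (Real.tsum_le_of_sum_le hc hB) ha₀
    _ ≤ Q := hasSum_le (fun i => mul_le_mul_of_nonneg_right (ha i) (hc i))
      ((summable_of_sum_le hc hB).hasSum.mul_left a₀) hQ

section Linearization

variable {K : ℝ → ℝ} {k : ℕ → ℝ}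

theorem integral_Llin_mul_self (hsum : Summable fun m => |k m|)
    (hK : ∀ θ : ℝ, HasSum (fun m : ℕ => k (m + 1) * cos (2 * (m + 1) * θ)) (K θ))
    (lam : ℝ) {v : ℝ → ℝ} (hv : MemLp v 2 μ₀) :
    ∫ θ in (0:ℝ)..2 * π, Llin K lam v θ * v θ =
      (eLpNorm v 2 μ₀).toReal ^ 2 +
        lam / (2 * π) * ∫ θ, (∫ t, K (θ - t) * v t ∂μ₀) * v θ ∂μ₀ := by
  have hform := integrable_cos_kernel_mul ((summable_nat_add_iff 1).mpr hsum) hK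
    (hv.integrable one_le_two)
  have hsq : Integrable (fun θ => v θ * v θ) μ₀ := by simpa only [sq] using hv.integrable_sq
  rw [← integral_eq_intervalIntegral_zero_two_pi, ← integral_mul_self_eq_sq_eLpNorm hv,
    ← MeasureTheory.integral_const_mul, ← integral_add hsq (hform.const_mul _)]
  congr 1 with θ
  rw [Llin, ← integral_eq_intervalIntegral_zero_two_pi]
  ring

theorem le_integral_Llin_mul_self (hsum : Summable fun m => |k m|)
    (hK : ∀ θ : ℝ, HasSum (fun m : ℕ => k (m + 1) * cos (2 * (m + 1) * θ)) (K θ))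
    (hk : ∀ m : ℕ, k 1 ≤ k (m + 1)) (hk₁ : k 1 ≤ 0) {lam : ℝ} (hlam : 0 ≤ lam)
    {v : ℝ → ℝ} (hv : MemLp v 2 μ₀) :
    (1 + lam * k 1 / 2) * (eLpNorm v 2 μ₀).toReal ^ 2 ≤
      ∫ θ in (0:ℝ)..2 * π, Llin K lam v θ * v θ := by
  have hbessel : ∀ s : Finset ℕ, ∑ m ∈ s, (cosCoeff μ₀ v (2 * (m + 1)) ^ 2 +
      sinCoeff μ₀ v (2 * (m + 1)) ^ 2) ≤ π * (eLpNorm v 2 μ₀).toReal ^ 2 := by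
    simpa using sum_sq_cosCoeff_add_sq_sinCoeff_le (n := fun m : ℕ => 2 * ((m : ℤ) + 1))
      (fun m m' h => by simpa using h) (fun m => by positivity) hv
  have hform := mul_le_of_hasSum_mul_of_sum_le
    (hasSum_cos_kernel_form ((summable_nat_add_iff 1).mpr hsum) hK (hv.integrable one_le_two))
    (fun m => by positivity) hbessel hk hk₁
  rw [integral_Llin_mul_self hsum hK lam hv]
  calc (1 + lam * k 1 / 2) * (eLpNorm v 2 μ₀).toReal ^ 2
      = (eLpNorm v 2 μ₀).toReal ^ 2 +
          lam / (2 * π) * (k 1 * (π * (eLpNorm v 2 μ₀).toReal ^ 2)) := by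
        field_simp
    _ ≤ _ := by gcongr

end Linearization

section CosTwoMul

theorem periodic_cos_two_mul : Function.Periodic (fun θ => cos (2 * θ)) π := fun θ => by
  simp only [mul_add, cos_add_two_pi]

theorem memX_cos_two_mul : MemX fun θ => cos (2 * θ) := by
  refine ⟨MemLp.of_bound (by fun_prop) 1 (.of_forall fun θ => abs_cos_le_one _),
    .of_forall periodic_cos_two_mul, .of_forall fun θ => ?_, ?_⟩
  · show cos (2 * (2 * π - θ)) = cos (2 * θ)
    rw [show 2 * (2 * π - θ) = -(2 * θ) + (2 : ℕ) * (2 * π) by push_cast; ring,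
      cos_add_nat_mul_two_pi, cos_neg]
  · simpa using integral_cos_int_mul_add 2 0

theorem integral_cos_mul_cos_two_mul (m : ℕ) (φ : ℝ) :
    ∫ t, cos (2 * (m + 1) * t - φ) * cos (2 * t) ∂μ₀ = if m = 0 then π * cos φ else 0 := by
  have h := integral_cos_mul_cos_int (2 * (m + 1)) 2 (by omega) φ 0
  push_cast at h
  simp only [sub_zero] at h
  rw [integral_eq_intervalIntegral_zero_two_pi, h]
  congr 1
  simp

theorem cosCoeff_cos_two_mul (m : ℕ) :
    cosCoeff μ₀ (fun t => cos (2 * t)) (2 * (m + 1)) = if m = 0 then π else 0 := by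
  simpa [cosCoeff] using integral_cos_mul_cos_two_mul m 0

theorem sinCoeff_cos_two_mul (m : ℕ) :
    sinCoeff μ₀ (fun t => cos (2 * t)) (2 * (m + 1)) = 0 := by
  simpa [sinCoeff, cos_sub_pi_div_two] using integral_cos_mul_cos_two_mul m (π / 2)

theorem integral_Llin_cos_two_mul {K : ℝ → ℝ} {k : ℕ → ℝ} (hsum : Summable fun m => |k m|)
    (hK : ∀ θ : ℝ, HasSum (fun m : ℕ => k (m + 1) * cos (2 * (m + 1) * θ)) (K θ)) (lam : ℝ) :
    ∫ θ in (0:ℝ)..2 * π, Llin K lam (fun θ => cos (2 * θ)) θ * cos (2 * θ) =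
      π * (1 + lam * k 1 / 2) := by
  have hv : MemLp (fun θ => cos (2 * θ)) 2 μ₀ := memX_cos_two_mul.1
  have hnorm : (eLpNorm (fun θ => cos (2 * θ)) 2 μ₀).toReal ^ 2 = π := by
    rw [← integral_mul_self_eq_sq_eLpNorm hv]
    simpa using integral_cos_mul_cos_two_mul 0 0
  have hform := hasSum_cos_kernel_form ((summable_nat_add_iff 1).mpr hsum) hK
    (hv.integrable one_le_two)
  simp only [cosCoeff_cos_two_mul, sinCoeff_cos_two_mul] at hform
  have hQ : ∫ θ, (∫ t, K (θ - t) * cos (2 * t) ∂μ₀) * cos (2 * θ) ∂μ₀ = k 1 * π ^ 2 := by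
    refine hform.unique ?_
    convert hasSum_ite_eq 0 (k 1 * π ^ 2) using 1
    funext m
    split_ifs with hm <;> simp [hm]
  rw [integral_Llin_mul_self hsum hK lam hv, hnorm, hQ]
  field_simp

end CosTwoMul

theorem trivial_solution_stability_general (K : ℝ → ℝ)
    (k : ℕ → ℝ) (hsum : Summable fun m => |k m|)
    (hK : ∀ θ : ℝ, HasSum (fun m : ℕ => k (m + 1) * Real.cos (2 * (m + 1) * θ)) (K θ))
    (hkneg : ∀ n : ℕ, 1 ≤ n → k n < 0)
    (hkmono : ∀ n : ℕ, 1 ≤ n → k n < k (n + 1)) :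
    (∀ lam : ℝ, 0 < lam → lam < -2 / k 1 →
      ∀ v : ℝ → ℝ, Measurable v → Function.Periodic v (2 * π) → MemX v →
        ((1 - lam * |k 1| / 2) *
            ((eLpNorm v 2 (volume.restrict (Set.Ioc (0:ℝ) (2 * π)))).toReal) ^ 2 ≤
          ∫ θ in (0:ℝ)..(2 * π), Llin K lam v θ * v θ) ∧
        (eLpNorm v 2 (volume.restrict (Set.Ioc (0:ℝ) (2 * π))) ≠ 0 →
          0 < ∫ θ in (0:ℝ)..(2 * π), Llin K lam v θ * v θ)) ∧
    (∀ lam : ℝ, -2 / k 1 < lam →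
      ∃ v : ℝ → ℝ, Measurable v ∧ Function.Periodic v (2 * π) ∧ MemX v ∧
        (∀ θ, v θ = Real.cos (2 * θ)) ∧
        (∫ θ in (0:ℝ)..(2 * π), Llin K lam v θ * v θ) < 0) := by
  have hk₁ : k 1 < 0 := hkneg 1 le_rfl
  have hk : ∀ m : ℕ, k 1 ≤ k (m + 1) := fun m =>
    monotone_nat_of_le_succ (f := fun m => k (m + 1)) (fun m => (hkmono (m + 1) m.succ_pos).le)
      m.zero_le
  refine ⟨fun lam hlam₀ hlam v _ _ hv => ?_, fun lam hlam => ⟨_, by fun_prop,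
    by simpa using periodic_cos_two_mul.nat_mul 2, memX_cos_two_mul, fun _ => rfl, ?_⟩⟩
  · have hcoef : 0 < 1 + lam * k 1 / 2 := by linarith [(lt_div_iff_of_neg hk₁).1 hlam]
    have hbound := le_integral_Llin_mul_self hsum hK hk hk₁.le hlam₀.le hv.1
    rw [abs_of_neg hk₁, show 1 - lam * -k 1 / 2 = 1 + lam * k 1 / 2 by ring]
    exact ⟨hbound, fun hne => (mul_pos hcoef
      (pow_pos (ENNReal.toReal_pos hne hv.1.eLpNorm_ne_top) 2)).trans_le hbound⟩
  · rw [integral_Llin_cos_two_mul hsum hK]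
    exact mul_neg_of_pos_of_neg pi_pos (by linarith [(div_lt_iff_of_neg hk₁).1 hlam])

/-- Stability of the trivial solution: for `0 < λ < λ₁ = -2/k₁` the linearization
`L_λ` is positive definite on `X` (with `⟨L_λ v, v⟩ ≥ (1 - λ|k₁|/2)‖v‖² > 0` for
`v ≠ 0`), while for `λ > λ₁` there is `v ∈ X` (e.g. `v = cos(2θ)`) with
`⟨L_λ v, v⟩ < 0`; hence `u ≡ 0` is linearly stable for `λ < λ₁` and unstable for
`λ > λ₁`. -/
theorem trivial_solution_stability (K : ℝ → ℝ) (hKcont : Continuous K)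
    (hKper : Function.Periodic K (2 * π))
    (k : ℕ → ℝ) (hsum : Summable fun m => |k m|)
    (hK : ∀ θ : ℝ, HasSum (fun m : ℕ => k (m + 1) * Real.cos (2 * (m + 1) * θ)) (K θ))
    (hkneg : ∀ n : ℕ, 1 ≤ n → k n < 0)
    (hkmono : ∀ n : ℕ, 1 ≤ n → k n < k (n + 1)) :
    (∀ lam : ℝ, 0 < lam → lam < -2 / k 1 →
      ∀ v : ℝ → ℝ, Measurable v → Function.Periodic v (2 * π) → MemX v →
        ((1 - lam * |k 1| / 2) *
            ((eLpNorm v 2 (volume.restrict (Set.Ioc (0:ℝ) (2 * π)))).toReal) ^ 2 ≤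
          ∫ θ in (0:ℝ)..(2 * π), Llin K lam v θ * v θ) ∧
        (eLpNorm v 2 (volume.restrict (Set.Ioc (0:ℝ) (2 * π))) ≠ 0 →
          0 < ∫ θ in (0:ℝ)..(2 * π), Llin K lam v θ * v θ)) ∧
    (∀ lam : ℝ, -2 / k 1 < lam →
      ∃ v : ℝ → ℝ, Measurable v ∧ Function.Periodic v (2 * π) ∧ MemX v ∧
        (∀ θ, v θ = Real.cos (2 * θ)) ∧
        (∫ θ in (0:ℝ)..(2 * π), Llin K lam v θ * v θ) < 0) :=
  trivial_solution_stability_general K k hsum hK hkneg hkmono
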